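/- arXiv:1611.08198 — 2 statements merged into one kernel-verified Lean document; each statement's English description precedes it below -/
import Mathlib

section
/- Let T be a string of length n ending in a unique smallest sentinel, with suffix array SA. For each i with SA[i] ≠ 0, let j be the index with SA[j] = SA[i] - 1 (i.e., the rank of the suffix one position earlier in the text). Then T[SA[j]] = BWT[i], and moreover the map i ↦ j restricted to indices with equal BWT symbol is strictly increasing (the k-th occurrence of symbol α in the BWT corresponds to the k-th occurrence of α as a first symbol of a sorted suffix). -/
/-- The LF-mapping: if `SA j = SA i - 1` then the first symbol of the `j`-th sorted
suffix equals `BWT[i]`, and the map `i ↦ j` is strictly increasing on indices with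
equal BWT symbol. -/
theorem lf_mapping {α : Type*} [LinearOrder α] (T : List α) (n : ℕ) (sep : α)
    (hn : T.length = n) (hn1 : 1 ≤ n)
    (hlast : T.getD (n - 1) sep = sep)
    (hsep : ∀ i, i < n - 1 → sep < T.getD i sep)
    (SA : ℕ → ℕ)
    (hSAlt : ∀ i, i < n → SA i < n)
    (hSAinj : ∀ i j, i < n → j < n → SA i = SA j → i = j)
    (hsorted : ∀ i j, i < j → j < n →
      List.Lex (· < ·) (T.drop (SA i)) (T.drop (SA j))) :
    (∀ i j, i < n → j < n → SA i ≠ 0 → SA j = SA i - 1 →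
      T.getD (SA j) sep = (if SA i = 0 then sep else T.getD (SA i - 1) sep)) ∧
    (∀ i i' j j', i < i' → i' < n → j < n → j' < n →
      SA i ≠ 0 → SA i' ≠ 0 → SA j = SA i - 1 → SA j' = SA i' - 1 →
      T.getD (SA i - 1) sep = T.getD (SA i' - 1) sep → j < j') := by
  constructor
  · intro i j hi hj hne heq
    simp [heq, hne]
  · intro i i' j j' hii' hi' hj hj' hne hne' heq heq' hbwt
    have hi : i < n := lt_trans hii' hi'
    have h1 : SA i - 1 < T.length := by have := hSAlt i hi; omega
    have h1' : SA i' - 1 < T.length := by have := hSAlt i' hi'; omega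
    have hd : T.drop (SA i - 1) = T.getD (SA i - 1) sep :: T.drop (SA i) := by
      have e : SA i - 1 + 1 = SA i := by omega
      rw [List.drop_eq_getElem_cons h1, List.getD_eq_getElem _ _ h1, e]
    have hd' : T.drop (SA i' - 1) = T.getD (SA i' - 1) sep :: T.drop (SA i') := by
      have e : SA i' - 1 + 1 = SA i' := by omega
      rw [List.drop_eq_getElem_cons h1', List.getD_eq_getElem _ _ h1', e]
    have hlex : List.Lex (· < ·) (T.drop (SA j)) (T.drop (SA j')) := by
      rw [heq, heq', hd, hd', hbwt]
      exact List.Lex.cons (hsorted i i' hii' hi')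
    by_contra h
    push_neg at h
    rcases lt_or_eq_of_le h with h | h
    · exact asymm hlex (hsorted j' j h hj)
    · apply absurd (hSAinj i i' hi hi' ?_) (ne_of_lt hii')
      subst h
      omega
end

section
/- Let T be a string of length n ending in a unique smallest sentinel, and let s < n-1. Among the suffixes T_{s+1},...,T_{n-1}, suppose the suffix T_a immediately preceding T_s in lexicographic order has first symbol equal to T[s]. Then, among all i ∈ [s+1, n-1] with T[i] = T[s] and T_{i+1} < T_{s+1}, the suffix T_{a+1} is the lexicographically largest such T_{i+1}. -/
/-- Let `T_a` be the largest suffix among `T_{s+1},...,T_{n-1}` smaller than `T_s`,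
and suppose its first symbol equals `T[s]`. Then `T_{a+1} < T_{s+1}` and, among all
`i ∈ [s+1, n-1]` with `T[i] = T[s]` and `T_{i+1} < T_{s+1}`, the suffix `T_{a+1}` is
the lexicographically largest such `T_{i+1}`. -/
theorem pred_suffix_maximal {α : Type*} [LinearOrder α] (T : List α) (n : ℕ) (sep : α)
    (hn : T.length = n)
    (hlast : T.getD (n - 1) sep = sep)
    (hsep : ∀ i, i < n - 1 → sep < T.getD i sep)
    (s a : ℕ) (hs : s < n - 1)
    (ha1 : s + 1 ≤ a) (ha2 : a ≤ n - 1)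
    (haless : List.Lex (· < ·) (T.drop a) (T.drop s))
    (hamax : ∀ i, s + 1 ≤ i → i ≤ n - 1 → List.Lex (· < ·) (T.drop i) (T.drop s) →
      (List.Lex (· < ·) (T.drop i) (T.drop a) ∨ T.drop i = T.drop a))
    (hfirst : T.getD a sep = T.getD s sep) :
    List.Lex (· < ·) (T.drop (a + 1)) (T.drop (s + 1)) ∧
    (∀ i, s + 1 ≤ i → i ≤ n - 1 → T.getD i sep = T.getD s sep →
      List.Lex (· < ·) (T.drop (i + 1)) (T.drop (s + 1)) →
      (List.Lex (· < ·) (T.drop (i + 1)) (T.drop (a + 1)) ∨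
        T.drop (i + 1) = T.drop (a + 1))) := by
  have hn1 : 0 < n := by omega
  have hsn : s < T.length := by omega
  -- a < n - 1
  have hsepS : sep < T.getD s sep := hsep s hs
  have hane : a ≠ n - 1 := by
    intro h; rw [h, hlast] at hfirst
    have := hsepS; rw [← hfirst] at this; exact lt_irrefl sep this
  have han : a < n - 1 := lt_of_le_of_ne ha2 hane
  have haT : a < T.length := by omega
  have hdropa : T.drop a = T[a] :: T.drop (a + 1) := List.drop_eq_getElem_cons haT
  have hdrops : T.drop s = T[s] :: T.drop (s + 1) := List.drop_eq_getElem_cons hsn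
  have hga : T.getD a sep = T[a] := List.getD_eq_getElem T sep haT
  have hgs : T.getD s sep = T[s] := List.getD_eq_getElem T sep hsn
  have has : T[a] = T[s] := by rw [← hga, ← hgs]; exact hfirst
  have h1 : List.Lex (· < ·) (T.drop (a + 1)) (T.drop (s + 1)) := by
    rw [hdropa, hdrops, has] at haless
    cases haless with
    | cons h => exact h
    | rel h => exact absurd h (lt_irrefl _)
  refine ⟨h1, fun i hi1 hi2 hieq hilex => ?_⟩
  have hiS : sep < T.getD i sep := hieq ▸ hsepS
  have hine : i ≠ n - 1 := by
    intro h; rw [h, hlast] at hiS; exact absurd hiS (lt_irrefl sep)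
  have hin : i < n - 1 := lt_of_le_of_ne hi2 hine
  have hiT : i < T.length := by omega
  have hdropi : T.drop i = T[i] :: T.drop (i + 1) := List.drop_eq_getElem_cons hiT
  have hgi : T.getD i sep = T[i] := List.getD_eq_getElem T sep hiT
  have his : T[i] = T[s] := by rw [← hgi, ← hgs]; exact hieq
  have hlex : List.Lex (· < ·) (T.drop i) (T.drop s) := by
    rw [hdropi, hdrops, his]
    exact List.Lex.cons hilex
  rcases hamax i hi1 hi2 hlex with h | h
  · rw [hdropi, hdropa, his, ← has] at h
    cases h with
    | cons h => exact Or.inl h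
    | rel h => exact absurd h (lt_irrefl _)
  · rw [hdropi, hdropa] at h
    right; exact (List.cons_eq_cons.mp h).2
end
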